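/- Let s > 0. The Hausdorff content in dimension s is upper semicontinuous with respect to Gromov–Hausdorff convergence of compact metric spaces: if K_α (α ∈ ℕ) and K are compact metric spaces with Gromov–Hausdorff distance d_GH(K_α, K) → 0, then limsup_{α→∞} H^s_∞(K_α) ≤ H^s_∞(K), where H^s_∞ of a compact metric space denotes the Hausdorff content of the whole space. -/

import Mathlib

open Metric Filter Set
open scoped ENNReal

/-- `ω_s = π^{s/2}/Γ(s/2+1)`. -/
noncomputable def omegaVol (s : ℝ) : ℝ := Real.pi ^ (s / 2) / Real.Gamma (s / 2 + 1)

/-- The `s`-dimensional Hausdorff content of a whole metric space: the infimum of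
`Σ_i ω_s r_i^s` over countable covers of the space by open balls `B_{r_i}(x_i)`. -/
noncomputable def hausdorffContent (s : ℝ) (K : Type*) [MetricSpace K] : ℝ≥0∞ :=
  ⨅ (c : ℕ → K × ℝ) (_ : ∀ i, 0 < (c i).2)
    (_ : (Set.univ : Set K) ⊆ ⋃ i, ball (c i).1 (c i).2),
    ∑' i, ENNReal.ofReal (omegaVol s * (c i).2 ^ s)

/-! A countable ball cover of `L` whose weighted sum is close to `H^s_∞(L)` has, by compactness, a
finite subcover. If `d_GH(X, L) < δ`, moving its centers through an optimal coupling gives a cover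
of `X` by as many balls, with radii enlarged by `2δ`, and this finite cover is completed to a
countable one by balls of arbitrarily small total weight. As `δ → 0` the enlarged finite sum tends
to the original one, so `H^s_∞(X)` is eventually below any bound exceeding `H^s_∞(L)`. -/

open Topology

universe u

lemma omegaVol_pos {s : ℝ} (hs : 0 < s) : 0 < omegaVol s :=
  div_pos (Real.rpow_pos_of_pos Real.pi_pos _) (Real.Gamma_pos_of_pos (by linarith))

section HausdorffContent

variable {s : ℝ} {X : Type*} [MetricSpace X]

lemma hausdorffContent_le_tsum (c : ℕ → X × ℝ) (hpos : ∀ i, 0 < (c i).2)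
    (hcov : (univ : Set X) ⊆ ⋃ i, ball (c i).1 (c i).2) :
    hausdorffContent s X ≤ ∑' i, ENNReal.ofReal (omegaVol s * (c i).2 ^ s) :=
  iInf_le_of_le c (iInf_le_of_le hpos (iInf_le _ hcov))

lemma exists_pos_tsum_ofReal_omegaVol_mul_rpow_lt (hs : 0 < s) {ε : ℝ≥0∞} (hε : ε ≠ 0) :
    ∃ ρ : ℕ → ℝ, (∀ i, 0 < ρ i) ∧ ∑' i, ENNReal.ofReal (omegaVol s * ρ i ^ s) < ε := by
  obtain ⟨ε', hε'pos, hε'sum⟩ := ENNReal.exists_pos_sum_of_countable hε ℕ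
  have hω := omegaVol_pos hs
  refine ⟨fun i => (ε' i / omegaVol s) ^ s⁻¹,
    fun i => Real.rpow_pos_of_pos (div_pos (NNReal.coe_pos.2 (hε'pos i)) hω) _, ?_⟩
  convert hε'sum using 3 with i
  rw [Real.rpow_inv_rpow (by positivity) hs.ne', mul_div_cancel₀ _ hω.ne', ENNReal.ofReal_coe_nnreal]

/-- The balls missing from a countable cover are given radii so small that their total
contribution is arbitrarily small. -/
lemma hausdorffContent_le_sum [Nonempty X] (hs : 0 < s) (c : ℕ → X × ℝ) (t : Finset ℕ)
    (hpos : ∀ i ∈ t, 0 < (c i).2) (hcov : (univ : Set X) ⊆ ⋃ i ∈ t, ball (c i).1 (c i).2) :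
    hausdorffContent s X ≤ ∑ i ∈ t, ENNReal.ofReal (omegaVol s * (c i).2 ^ s) := by
  refine ENNReal.le_of_forall_pos_le_add fun ε hε _ => ?_
  obtain ⟨ρ, hρpos, hρsum⟩ :=
    exists_pos_tsum_ofReal_omegaVol_mul_rpow_lt hs (ENNReal.coe_ne_zero.2 hε.ne')
  obtain ⟨x₀⟩ := ‹Nonempty X›
  classical
  let g : ℕ → X × ℝ := fun i => if i ∈ t then c i else (x₀, ρ i)
  have hgpos : ∀ i, 0 < (g i).2 := fun i => by
    by_cases hi : i ∈ t <;> simp [g, hi, hpos, hρpos]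
  have hgcov : (univ : Set X) ⊆ ⋃ i, ball (g i).1 (g i).2 := fun x hx => by
    obtain ⟨i, hi, hx⟩ := mem_iUnion₂.1 (hcov hx)
    exact mem_iUnion.2 ⟨i, by simpa [g, hi] using hx⟩
  have hterm : ∀ i, ENNReal.ofReal (omegaVol s * (g i).2 ^ s) ≤
      (t : Set ℕ).indicator (fun i => ENNReal.ofReal (omegaVol s * (c i).2 ^ s)) i +
        ENNReal.ofReal (omegaVol s * ρ i ^ s) := fun i => by
    by_cases hi : i ∈ t <;> simp [g, hi]
  calc hausdorffContent s X ≤ ∑' i, ENNReal.ofReal (omegaVol s * (g i).2 ^ s) :=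
        hausdorffContent_le_tsum g hgpos hgcov
    _ ≤ ∑ i ∈ t, ENNReal.ofReal (omegaVol s * (c i).2 ^ s) +
          ∑' i, ENNReal.ofReal (omegaVol s * ρ i ^ s) := by
        rw [sum_eq_tsum_indicator, ← ENNReal.tsum_add]
        exact ENNReal.tsum_le_tsum hterm
    _ ≤ _ := by gcongr

lemma exists_finset_cover_sum_lt [CompactSpace X] {a : ℝ≥0∞} (ha : hausdorffContent s X < a) :
    ∃ (c : ℕ → X × ℝ) (t : Finset ℕ), (∀ i, 0 < (c i).2) ∧
      (univ : Set X) ⊆ ⋃ i ∈ t, ball (c i).1 (c i).2 ∧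
      ∑ i ∈ t, ENNReal.ofReal (omegaVol s * (c i).2 ^ s) < a := by
  simp only [hausdorffContent, iInf_lt_iff] at ha
  obtain ⟨c, hpos, hcov, hsum⟩ := ha
  obtain ⟨t, ht⟩ := isCompact_univ.elim_finite_subcover _ (fun i => isOpen_ball) hcov
  exact ⟨c, t, hpos, ht, (ENNReal.sum_le_tsum t).trans_lt hsum⟩

end HausdorffContent

namespace GromovHausdorff

variable {X : Type*} [MetricSpace X] [CompactSpace X] [Nonempty X]
  {Y : Type*} [MetricSpace Y] [CompactSpace Y] [Nonempty Y] {δ : ℝ}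

lemma exists_dist_optimalGHInj_lt (h : ghDist X Y < δ) :
    (∀ x, ∃ y, dist (optimalGHInjl X Y x) (optimalGHInjr X Y y) < δ) ∧
      ∀ y, ∃ x, dist (optimalGHInjl X Y x) (optimalGHInjr X Y y) < δ := by
  have hΦ := (isometry_optimalGHInjl X Y).continuous
  have hΨ := (isometry_optimalGHInjr X Y).continuous
  have hfin : hausdorffEDist (range (optimalGHInjl X Y)) (range (optimalGHInjr X Y)) ≠ ⊤ :=
    hausdorffEDist_ne_top_of_nonempty_of_bounded (range_nonempty _) (range_nonempty _)
      (isCompact_range hΦ).isBounded (isCompact_range hΨ).isBounded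
  rw [← hausdorffDist_optimal] at h
  constructor
  · intro x
    obtain ⟨_, ⟨y, rfl⟩, hy⟩ := exists_dist_lt_of_hausdorffDist_lt (mem_range_self x) h hfin
    exact ⟨y, hy⟩
  · intro y
    obtain ⟨_, ⟨x, rfl⟩, hx⟩ := exists_dist_lt_of_hausdorffDist_lt' (mem_range_self y) h hfin
    exact ⟨x, hx⟩

/-- Centers are matched through the optimal coupling, in which every point of `X` is `δ`-close to
a point of `Y` and vice versa. -/
lemma exists_ball_cover_of_ghDist_lt (h : ghDist X Y < δ) {ι : Type*} (y : ι → Y) (r : ι → ℝ)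
    (t : Finset ι) (hcov : (univ : Set Y) ⊆ ⋃ i ∈ t, ball (y i) (r i)) :
    ∃ x : ι → X, (univ : Set X) ⊆ ⋃ i ∈ t, ball (x i) (r i + 2 * δ) := by
  obtain ⟨hleft, hright⟩ := exists_dist_optimalGHInj_lt h
  choose x hx using fun i => hright (y i)
  refine ⟨x, fun z _ => ?_⟩
  obtain ⟨w, hw⟩ := hleft z
  obtain ⟨i, hi, hwi⟩ := mem_iUnion₂.1 (hcov (mem_univ w))
  refine mem_iUnion₂.2 ⟨i, hi, ?_⟩
  rw [mem_ball, ← (isometry_optimalGHInjl X Y).dist_eq]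
  have hwi' : dist (optimalGHInjr X Y w) (optimalGHInjr X Y (y i)) < r i := by
    rw [(isometry_optimalGHInjr X Y).dist_eq]
    exact hwi
  calc _ ≤ dist (optimalGHInjl X Y z) (optimalGHInjr X Y w) +
        dist (optimalGHInjr X Y w) (optimalGHInjr X Y (y i)) +
        dist (optimalGHInjr X Y (y i)) (optimalGHInjl X Y (x i)) := dist_triangle4 _ _ _ _
    _ < δ + r i + δ := by
        gcongr
        rw [dist_comm]
        exact hx i
    _ = r i + 2 * δ := by ring

end GromovHausdorff

lemma exists_pos_forall_ghDist_lt_hausdorffContent_lt {s : ℝ} (hs : 0 < s) (L : Type*)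
    [MetricSpace L] [CompactSpace L] [Nonempty L] {a : ℝ≥0∞} (ha : hausdorffContent s L < a) :
    ∃ δ > 0, ∀ (X : Type u) [MetricSpace X] [CompactSpace X] [Nonempty X],
      GromovHausdorff.ghDist X L < δ → hausdorffContent s X < a := by
  obtain ⟨c, t, hpos, hcov, hsum⟩ := exists_finset_cover_sum_lt ha
  have hcont : Continuous fun δ : ℝ =>
      ∑ i ∈ t, ENNReal.ofReal (omegaVol s * ((c i).2 + 2 * δ) ^ s) := by
    have := Real.continuous_rpow_const hs.le
    exact continuous_finsetSum t fun i _ => ENNReal.continuous_ofReal.comp (by fun_prop)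
  have hev : ∀ᶠ δ in 𝓝[>] (0 : ℝ),
      ∑ i ∈ t, ENNReal.ofReal (omegaVol s * ((c i).2 + 2 * δ) ^ s) < a :=
    nhdsWithin_le_nhds (hcont.continuousAt.eventually (gt_mem_nhds (by simpa using hsum)))
  obtain ⟨δ, hδsum, hδ⟩ := (hev.and self_mem_nhdsWithin).exists
  refine ⟨δ, hδ, fun X _ _ _ hX => ?_⟩
  obtain ⟨x, hx⟩ := GromovHausdorff.exists_ball_cover_of_ghDist_lt hX _ _ t hcov
  calc hausdorffContent s X
      ≤ ∑ i ∈ t, ENNReal.ofReal (omegaVol s * ((c i).2 + 2 * δ) ^ s) :=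
        hausdorffContent_le_sum hs (fun i => (x i, (c i).2 + 2 * δ)) t
          (fun i _ => by linarith [hpos i]) hx
    _ < a := hδsum

/-- Upper semicontinuity of the Hausdorff content with respect to Gromov–Hausdorff
convergence of compact metric spaces. -/
theorem hausdorffContent_limsup_le_of_ghDist_tendsto_zero (s : ℝ) (hs : 0 < s)
    (K : ℕ → Type) [∀ α, MetricSpace (K α)] [∀ α, CompactSpace (K α)] [∀ α, Nonempty (K α)]
    (L : Type) [MetricSpace L] [CompactSpace L] [Nonempty L]
    (hconv : Tendsto (fun α => GromovHausdorff.ghDist (K α) L) atTop (nhds 0)) :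
    Filter.limsup (fun α => hausdorffContent s (K α)) atTop ≤ hausdorffContent s L := by
  refine le_of_forall_gt_imp_ge_of_dense fun a ha => ?_
  obtain ⟨δ, hδ, hδa⟩ := exists_pos_forall_ghDist_lt_hausdorffContent_lt hs L ha
  refine limsup_le_of_le (by isBoundedDefault) ?_
  filter_upwards [hconv.eventually_lt_const hδ] with α hα
  exact (hδa (K α) hα).le
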